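/- arXiv:2402.18185 — 2 statements merged into one kernel-verified Lean document; each statement's English description precedes it below -/
import Mathlib

section
/- Let f : ℝ^p → ℝ be differentiable, let S ⊆ {1, …, p}, let α ∈ ℝ^p with α_j ≠ 0 for at least one j ∈ S, and let ᾱ be the vector with ᾱ_j = 0 for j ∈ S and ᾱ_j = α_j for j ∉ S. Let w_j > 0 for j ∈ S. If |∂f/∂α_j(ξ)| < w_j for every j ∈ S and every ξ on the closed segment from ᾱ to α, then f(α) − Σ_{j∈S} w_j |α_j| < f(ᾱ). -/
open Finset

/-- If the penalty weights on the coordinates in `S` strictly dominate the corresponding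
partial derivatives of `f` along the segment from the `S`-zeroing `ᾱ` of `α` to `α`,
and some `S`-coordinate of `α` is nonzero, then the penalized value at `α` is strictly
below the value at `ᾱ`. -/
theorem penalized_strict_decrease (p : ℕ) (f : (Fin p → ℝ) → ℝ)
    (hf : Differentiable ℝ f) (S : Finset (Fin p)) (α : Fin p → ℝ)
    (hα : ∃ j ∈ S, α j ≠ 0) (w : Fin p → ℝ) (hw : ∀ j ∈ S, 0 < w j)
    (hderiv : ∀ j ∈ S, ∀ ξ ∈ segment ℝ (fun j => if j ∈ S then 0 else α j) α,
      |fderiv ℝ f ξ (Pi.single j 1)| < w j) :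
    f α - ∑ j ∈ S, w j * |α j| < f (fun j => if j ∈ S then 0 else α j) := by
  set ᾱ : Fin p → ℝ := fun j => if j ∈ S then 0 else α j with hᾱdef
  set v : Fin p → ℝ := α - ᾱ with hvdef
  have hv' : v = ∑ j ∈ S, α j • (Pi.single j 1 : Fin p → ℝ) := by
    funext k
    simp only [Finset.sum_apply, Pi.smul_apply, Pi.single_apply, smul_eq_mul,
      mul_ite, mul_one, mul_zero, hvdef, Pi.sub_apply, hᾱdef]
    by_cases hk : k ∈ S
    · rw [Finset.sum_ite_eq S k α]
      simp [hk]
    · rw [Finset.sum_ite_eq S k α]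
      simp [hk]
  -- derivative of g t = f (ᾱ + t • v)
  have hg : ∀ t : ℝ, HasDerivAt (fun t : ℝ => f (ᾱ + t • v))
      (fderiv ℝ f (ᾱ + t • v) v) t := by
    intro t
    have h1 : HasDerivAt (fun t : ℝ => ᾱ + t • v) v t := by
      simpa using ((hasDerivAt_id t).smul_const v).const_add ᾱ
    exact (hf (ᾱ + t • v)).hasFDerivAt.comp_hasDerivAt t h1
  obtain ⟨c, hc, hceq⟩ := exists_hasDerivAt_eq_slope (fun t : ℝ => f (ᾱ + t • v))
    (fun t => fderiv ℝ f (ᾱ + t • v) v) zero_lt_one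
    (fun t _ => (hg t).continuousAt.continuousWithinAt)
    (fun t _ => hg t)
  have h10 : ᾱ + (1:ℝ) • v = α := by simp [hvdef]
  have h00 : ᾱ + (0:ℝ) • v = ᾱ := by simp
  rw [h10, h00] at hceq
  have hξseg : ᾱ + c • v ∈ segment ℝ ᾱ α := by
    refine ⟨1 - c, c, by linarith [hc.2], le_of_lt hc.1, by ring, ?_⟩
    simp only [hvdef]
    module
  have hbound : fderiv ℝ f (ᾱ + c • v) v < ∑ j ∈ S, w j * |α j| := by
    calc fderiv ℝ f (ᾱ + c • v) v ≤ |fderiv ℝ f (ᾱ + c • v) v| := le_abs_self _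
    _ = |∑ j ∈ S, α j * fderiv ℝ f (ᾱ + c • v) (Pi.single j 1)| := by
        rw [hv', map_sum]
        simp [smul_eq_mul]
    _ ≤ ∑ j ∈ S, |α j * fderiv ℝ f (ᾱ + c • v) (Pi.single j 1)| :=
        Finset.abs_sum_le_sum_abs _ _
    _ < ∑ j ∈ S, w j * |α j| := by
        obtain ⟨j₀, hj₀S, hj₀⟩ := hα
        refine Finset.sum_lt_sum (fun j hj => ?_) ⟨j₀, hj₀S, ?_⟩
        · rw [abs_mul]
          calc |α j| * |fderiv ℝ f (ᾱ + c • v) (Pi.single j 1)|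
              ≤ |α j| * w j := by
                exact mul_le_mul_of_nonneg_left
                  (le_of_lt (hderiv j hj _ hξseg)) (abs_nonneg _)
          _ = w j * |α j| := mul_comm _ _
        · rw [abs_mul, mul_comm (w j₀)]
          exact mul_lt_mul_of_pos_left (hderiv j₀ hj₀S _ hξseg)
            (abs_pos.mpr hj₀)
  rw [hceq] at hbound
  have : f α - f ᾱ < ∑ j ∈ S, w j * |α j| := by
    have := hbound
    field_simp at this
    linarith
  linarith
end

section
/- Let S ⊆ {1, …, p}, let α* ∈ ℝ^p with α*_j = 0 for all j ∈ S, let r > 0, λ > 0 and weights w_1, …, w_p > 0. Suppose that for every j ∈ S and every ξ in the closed Euclidean ball B̄(α*, r), |∂ℓ_n/∂α_j(ξ)| < λ w_j. Then every maximizer α̂ of the penalized log-likelihood α ↦ ℓ_n(α) − λ Σ_{j=1}^p w_j |α_j| over B̄(α*, r) satisfies α̂_j = 0 for all j ∈ S. -/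
/-!
If `α̂ j ≠ 0`, replace `α̂` by the point `β` with `j`-th coordinate set to zero. Since
`α*_j = 0`, `β` stays in the ball, and the penalty drops by exactly `λ w_j |α̂_j|`. By the
mean value theorem on the segment `[β, α̂]`, which lies in the ball, the log-likelihood changes
by `|α̂_j| |∂ℓ_n/∂α_j(ξ)| < λ w_j |α̂_j|`, so `β` has a strictly larger penalized
log-likelihood, contradicting the maximality of `α̂`.
-/

open Finset
open scoped RealInnerProductSpace

section Logistic

variable {E : Type*} [NormedAddCommGroup E] [InnerProductSpace ℝ E] {m : Type*} [Fintype m]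

noncomputable def logisticLoglik (x : m → E) (z : m → ℝ) (a : E) : ℝ :=
  ∑ i, (z i * ⟪x i, a⟫ - Real.log (1 + Real.exp ⟪x i, a⟫))

theorem differentiable_logisticLoglik (x : m → E) (z : m → ℝ) :
    Differentiable ℝ (logisticLoglik x z) := by
  unfold logisticLoglik
  refine Differentiable.fun_sum fun i _ => ?_
  have hinner : Differentiable ℝ fun a : E => ⟪x i, a⟫ := (innerSL ℝ (x i)).differentiable
  exact (hinner.const_mul _).sub
    ((hinner.exp.const_add 1).log fun a => (add_pos one_pos (Real.exp_pos _)).ne')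

end Logistic

section CoordinateZeroing

variable {ι : Type*} [DecidableEq ι]

noncomputable def zeroCoord (α : EuclideanSpace ℝ ι) (j : ι) : EuclideanSpace ℝ ι :=
  α - α j • EuclideanSpace.single j 1

theorem zeroCoord_apply (α : EuclideanSpace ℝ ι) (j k : ι) :
    zeroCoord α j k = if k = j then 0 else α k := by
  by_cases hk : k = j <;> simp [zeroCoord, hk]

theorem sub_zeroCoord (α : EuclideanSpace ℝ ι) (j : ι) :
    α - zeroCoord α j = α j • EuclideanSpace.single j 1 := by
  simp [zeroCoord]

theorem dist_zeroCoord_le [Fintype ι] {α c : EuclideanSpace ℝ ι} {j : ι} (hc : c j = 0) :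
    dist (zeroCoord α j) c ≤ dist α c := by
  rw [EuclideanSpace.dist_eq, EuclideanSpace.dist_eq]
  gcongr with k
  rw [zeroCoord_apply]
  split_ifs with hk
  · subst hk; rw [hc, dist_self]; positivity
  · rfl

theorem sum_mul_abs_zeroCoord_add [Fintype ι] (w : ι → ℝ) (α : EuclideanSpace ℝ ι) (j : ι) :
    ∑ k, w k * |zeroCoord α j k| + w j * |α j| = ∑ k, w k * |α k| := by
  rw [← add_sum_erase _ _ (mem_univ j), ← add_sum_erase _ _ (mem_univ j), zeroCoord_apply,
    if_pos rfl, abs_zero, mul_zero, zero_add, add_comm]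
  congr 1
  refine sum_congr rfl fun k hk => ?_
  rw [zeroCoord_apply, if_neg (ne_of_mem_erase hk)]

variable [Fintype ι] {ℓ : EuclideanSpace ℝ ι → ℝ} {K : Set (EuclideanSpace ℝ ι)}
  {α : EuclideanSpace ℝ ι} {j : ι} {c : ℝ}

theorem abs_sub_zeroCoord_lt (hℓ : Differentiable ℝ ℓ) (hK : Convex ℝ K) (hα : α ∈ K)
    (hα₀ : zeroCoord α j ∈ K) (hαj : α j ≠ 0)
    (hderiv : ∀ ξ ∈ K, |fderiv ℝ ℓ ξ (EuclideanSpace.single j 1)| < c) :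
    |ℓ α - ℓ (zeroCoord α j)| < c * |α j| := by
  obtain ⟨ξ, hξ, hmvt⟩ := domain_mvt (fun ξ _ => (hℓ ξ).hasFDerivAt.hasFDerivWithinAt)
    hK hα₀ hα
  rw [hmvt, sub_zeroCoord, map_smul, smul_eq_mul, abs_mul, mul_comm]
  exact mul_lt_mul_of_pos_right (hderiv ξ (hK.segment_subset hα₀ hα hξ)) (abs_pos.2 hαj)

theorem IsMaxOn.apply_eq_zero_of_abs_fderiv_single_lt {lam : ℝ} {w : ι → ℝ}
    (hmax : IsMaxOn (fun β => ℓ β - lam * ∑ k, w k * |β k|) K α)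
    (hℓ : Differentiable ℝ ℓ) (hK : Convex ℝ K) (hα : α ∈ K) (hα₀ : zeroCoord α j ∈ K)
    (hderiv : ∀ ξ ∈ K, |fderiv ℝ ℓ ξ (EuclideanSpace.single j 1)| < lam * w j) :
    α j = 0 := by
  by_contra hαj
  have hlt := abs_sub_zeroCoord_lt hℓ hK hα hα₀ hαj hderiv
  have hle := isMaxOn_iff.1 hmax _ hα₀
  rw [← sum_mul_abs_zeroCoord_add w α j, mul_add] at hle
  linarith [le_abs_self (ℓ α - ℓ (zeroCoord α j))]

end CoordinateZeroing

theorem penalized_loglik_local_maximizer_sparse_general (n p : ℕ)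
    (x : Fin n → EuclideanSpace ℝ (Fin p)) (z : Fin n → ℝ)
    (S : Finset (Fin p)) (αstar : EuclideanSpace ℝ (Fin p))
    (hαstar : ∀ j ∈ S, αstar j = 0)
    (r lam : ℝ)
    (w : Fin p → ℝ)
    (hderiv : ∀ j ∈ S, ∀ ξ ∈ Metric.closedBall αstar r,
      |fderiv ℝ
          (fun a : EuclideanSpace ℝ (Fin p) =>
            ∑ i, (z i * ⟪x i, a⟫ - Real.log (1 + Real.exp ⟪x i, a⟫))) ξ
          (EuclideanSpace.single j 1)| < lam * w j)
    (αhat : EuclideanSpace ℝ (Fin p)) (hmem : αhat ∈ Metric.closedBall αstar r)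
    (hmax : ∀ β ∈ Metric.closedBall αstar r,
      (∑ i, (z i * ⟪x i, β⟫ - Real.log (1 + Real.exp ⟪x i, β⟫)))
          - lam * ∑ j, w j * |β j|
        ≤ (∑ i, (z i * ⟪x i, αhat⟫ - Real.log (1 + Real.exp ⟪x i, αhat⟫)))
          - lam * ∑ j, w j * |αhat j|) :
    ∀ j ∈ S, αhat j = 0 := by
  intro j hj
  have hmax' : IsMaxOn (fun β => logisticLoglik x z β - lam * ∑ k, w k * |β k|)
      (Metric.closedBall αstar r) αhat := isMaxOn_iff.2 hmax
  have hzero_mem : zeroCoord αhat j ∈ Metric.closedBall αstar r :=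
    (dist_zeroCoord_le (hαstar j hj)).trans hmem
  exact hmax'.apply_eq_zero_of_abs_fderiv_single_lt (differentiable_logisticLoglik x z)
    (convex_closedBall αstar r) hmem hzero_mem (hderiv j hj)

/-- If, on the closed Euclidean ball of radius `r` around `α*` (where `α*_j = 0` for
`j ∈ S`), the penalty weights `λ w_j` strictly dominate the partial derivatives of the
logistic log-likelihood for all `j ∈ S`, then every maximizer of the penalized
log-likelihood over the ball has zero `S`-coordinates. -/
theorem penalized_loglik_local_maximizer_sparse (n p : ℕ)
    (x : Fin n → EuclideanSpace ℝ (Fin p)) (z : Fin n → ℝ)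
    (hz : ∀ i, z i = 0 ∨ z i = 1)
    (S : Finset (Fin p)) (αstar : EuclideanSpace ℝ (Fin p))
    (hαstar : ∀ j ∈ S, αstar j = 0)
    (r lam : ℝ) (hr : 0 < r) (hlam : 0 < lam)
    (w : Fin p → ℝ) (hw : ∀ j, 0 < w j)
    (hderiv : ∀ j ∈ S, ∀ ξ ∈ Metric.closedBall αstar r,
      |fderiv ℝ
          (fun a : EuclideanSpace ℝ (Fin p) =>
            ∑ i, (z i * ⟪x i, a⟫ - Real.log (1 + Real.exp ⟪x i, a⟫))) ξ
          (EuclideanSpace.single j 1)| < lam * w j)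
    (αhat : EuclideanSpace ℝ (Fin p)) (hmem : αhat ∈ Metric.closedBall αstar r)
    (hmax : ∀ β ∈ Metric.closedBall αstar r,
      (∑ i, (z i * ⟪x i, β⟫ - Real.log (1 + Real.exp ⟪x i, β⟫)))
          - lam * ∑ j, w j * |β j|
        ≤ (∑ i, (z i * ⟪x i, αhat⟫ - Real.log (1 + Real.exp ⟪x i, αhat⟫)))
          - lam * ∑ j, w j * |αhat j|) :
    ∀ j ∈ S, αhat j = 0 :=
  penalized_loglik_local_maximizer_sparse_general n p x z S αstar hαstar r lam w hderiv αhat hmem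
    hmax
end
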